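/- Let f: ℝ → ℝ be continuous with an asymptotic expansion f(μ) = Σ_{i=0}^{d} a_i μ^{d-i} + O(μ^{-1+ε}) as μ → +∞ (for every ε > 0) and f(μ) = O(|μ|^{-∞}) as μ → −∞. Then for every integer k ≥ 1, the k-fold repeated integral F_k(λ) = ∫_{-∞}^λ ∫_{-∞}^{λ_1} ⋯ ∫_{-∞}^{λ_{k-1}} f(λ_k) dλ_k ⋯ dλ_1 satisfies λ^{-k} k! F_k(λ) = Σ_{i=0}^{d} [k!(d−i)!/(d−i+k)!] a_i λ^{d-i} + O(λ^{-1+ε}) as λ → +∞, for every ε > 0. -/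

import Mathlib

open MeasureTheory Filter Asymptotics Set

/-!
By induction on `k`, `F k` is continuous, decays faster than every power of `|λ|` at `−∞`, and
`F k − P k = O(λ^(k−1+ε))` at `+∞`, where `P k` is the `k`-fold primitive of the polynomial part
of `f` vanishing to order `k` at `0`. Rapid decay survives integration because
`∫_{−∞}^λ |μ|^p dμ = O(|λ|^(p+1))` for `p < −1`. For the expansion, split
`F (k+1) λ − P (k+1) λ = ∫_{−∞}^0 F k + ∫_0^λ (F k − P k)`: the constant is `O(λ^(k+ε))`, and
integrating a bound `O(μ^q)` with `q = k − 1 + ε > −1` gives `O(λ^(q+1))`. Multiplying by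
`λ^(−k) k!` turns `P k` into the stated sum and the error into `O(λ^(−1+ε))`.
-/

lemma isBigO_abs_rpow_atBot_of_le {p q : ℝ} (h : p ≤ q) :
    (fun x : ℝ => |x| ^ p) =O[atBot] fun x => |x| ^ q := by
  refine IsBigO.of_bound' ?_
  filter_upwards [eventually_le_atBot (-1)] with x hx
  have hx1 : 1 ≤ |x| := by rw [abs_of_neg (by linarith)]; linarith
  rw [Real.norm_of_nonneg (by positivity), Real.norm_of_nonneg (by positivity)]
  exact Real.rpow_le_rpow_of_exponent_le hx1 h

lemma isBigO_abs_rpow_of_forall_isBigO_abs_zpow {g : ℝ → ℝ}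
    (h : ∀ n : ℕ, g =O[atBot] fun x => |x| ^ (-(n : ℤ))) (p : ℝ) :
    g =O[atBot] fun x => |x| ^ p := by
  refine (h ⌈-p⌉₊).trans ?_
  simp_rw [← Real.rpow_intCast, Int.cast_neg, Int.cast_natCast]
  exact isBigO_abs_rpow_atBot_of_le (by linarith [Nat.le_ceil (-p)])

lemma isBigO_const_rpow_atTop (c : ℝ) {s : ℝ} (hs : 0 < s) :
    (fun _ : ℝ => c) =O[atTop] fun x => x ^ s :=
  (isBigO_const_one ℝ c atTop).trans
    ((isLittleO_one_left_iff ℝ).2 (tendsto_norm_atTop_atTop.comp (tendsto_rpow_atTop hs))).isBigO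

lemma integrableOn_Iic_abs_rpow {p : ℝ} (hp : p < -1) {c : ℝ} (hc : c < 0) :
    IntegrableOn (fun x : ℝ => |x| ^ p) (Iic c) := by
  have hneg := (Measure.measurePreserving_neg (volume : Measure ℝ)).integrableOn_comp_preimage
    (Homeomorph.neg ℝ).measurableEmbedding (f := fun x : ℝ => x ^ p) (s := Ioi (-c))
  have hpre : Neg.neg ⁻¹' Ioi (-c) = Iio c := by ext x; simp
  rw [hpre] at hneg
  refine ((hneg.2 (integrableOn_Ioi_rpow_of_lt hp (by linarith))).congr_fun (fun x hx => ?_)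
    measurableSet_Iio).congr_set_ae Iio_ae_eq_Iic.symm
  simp [abs_of_neg (hx.out.trans hc)]

lemma integral_Iic_abs_rpow {p : ℝ} (hp : p < -1) {c : ℝ} (hc : c < 0) :
    ∫ x in Iic c, |x| ^ p = (-c) ^ (p + 1) / (-(p + 1)) := by
  have h := integral_comp_neg_Iic c (fun x : ℝ => |x| ^ p)
  simp only [abs_neg] at h
  rw [h, setIntegral_congr_fun measurableSet_Ioi (g := fun x : ℝ => x ^ p)
    (fun x hx => by simp [abs_of_pos ((neg_pos.2 hc).trans hx)]),
    integral_Ioi_rpow_of_lt hp (by linarith), div_neg, neg_div]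

lemma integrableAtFilter_abs_rpow_atBot {p : ℝ} (hp : p < -1) :
    IntegrableAtFilter (fun x : ℝ => |x| ^ p) atBot :=
  ⟨Iic (-1), Iic_mem_atBot _, integrableOn_Iic_abs_rpow hp (by norm_num)⟩

lemma isBigO_integral_Iic_abs_rpow {g : ℝ → ℝ} {p : ℝ} (hp : p < -1)
    (h : g =O[atBot] fun x => |x| ^ p) :
    (fun l => ∫ x in Iic l, g x) =O[atBot] fun l => |l| ^ (p + 1) := by
  obtain ⟨C, hC⟩ := h.bound
  obtain ⟨M, hM⟩ := eventually_atBot.1 hC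
  refine IsBigO.of_bound (C / (-(p + 1))) ?_
  filter_upwards [eventually_le_atBot (min M (-1))] with l hl
  have hl0 : l < 0 := by linarith [min_le_right M (-1)]
  have hbound : ∀ x ∈ Iic l, ‖g x‖ ≤ C * |x| ^ p := fun x hx => by
    simpa [abs_of_nonneg (Real.rpow_nonneg (abs_nonneg x) p)] using
      hM x (hx.out.trans (hl.trans (min_le_left _ _)))
  calc ‖∫ x in Iic l, g x‖ ≤ ∫ x in Iic l, C * |x| ^ p :=
        norm_integral_le_of_norm_le ((integrableOn_Iic_abs_rpow hp hl0).const_mul C)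
          ((ae_restrict_iff' measurableSet_Iic).2 (Eventually.of_forall hbound))
    _ = C / (-(p + 1)) * ‖|l| ^ (p + 1)‖ := by
        rw [integral_const_mul, integral_Iic_abs_rpow hp hl0, ← abs_of_neg hl0,
          Real.norm_of_nonneg (by positivity)]
        ring

lemma isBigO_intervalIntegral_rpow_atTop {g : ℝ → ℝ} {q : ℝ} (hq : -1 < q) (hg : Continuous g)
    (h : g =O[atTop] fun x => x ^ q) :
    (fun l => ∫ x in (0 : ℝ)..l, g x) =O[atTop] fun l => l ^ (q + 1) := by
  obtain ⟨C, hC⟩ := h.bound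
  obtain ⟨M, hM⟩ := eventually_atTop.1 hC
  set M₁ := max M 1
  have hM₁ : 0 < M₁ := one_pos.trans_le (le_max_right _ _)
  have hsplit : (fun l => ∫ x in (0 : ℝ)..l, g x) =
      fun l => (∫ x in (0 : ℝ)..M₁, g x) + ∫ x in M₁..l, g x := funext fun l =>
    (intervalIntegral.integral_add_adjacent_intervals (hg.intervalIntegrable _ _)
      (hg.intervalIntegrable _ _)).symm
  rw [hsplit]
  refine (isBigO_const_rpow_atTop _ (by linarith)).add (IsBigO.of_bound (|C| / (q + 1)) ?_)
  filter_upwards [eventually_ge_atTop M₁] with l hl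
  have hbound : ∀ x ∈ Ioc M₁ l, ‖g x‖ ≤ |C| * x ^ q := fun x hx => by
    have hx0 : 0 < x := hM₁.trans hx.1
    simpa [abs_of_pos (Real.rpow_pos_of_pos hx0 q)] using
      (hM x ((le_max_left _ _).trans hx.1.le)).trans
        (mul_le_mul_of_nonneg_right (le_abs_self C) (norm_nonneg _))
  have hq1 : 0 < q + 1 := by linarith
  calc ‖∫ x in M₁..l, g x‖ ≤ ∫ x in M₁..l, |C| * x ^ q :=
        intervalIntegral.norm_integral_le_of_norm_le hl (ae_of_all _ hbound)
          ((intervalIntegral.intervalIntegrable_rpow' hq).const_mul _)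
    _ = |C| / (q + 1) * (l ^ (q + 1) - M₁ ^ (q + 1)) := by
        rw [intervalIntegral.integral_const_mul, integral_rpow (Or.inl hq)]
        ring
    _ ≤ |C| / (q + 1) * ‖l ^ (q + 1)‖ := by
        rw [Real.norm_of_nonneg (Real.rpow_nonneg (hM₁.le.trans hl) _)]
        gcongr
        linarith [Real.rpow_nonneg hM₁.le (q + 1)]

lemma integral_Iic_eq_add_intervalIntegral {g : ℝ → ℝ} (hg : ∀ l, IntegrableOn g (Iic l))
    (l : ℝ) : ∫ x in Iic l, g x = (∫ x in Iic 0, g x) + ∫ x in (0 : ℝ)..l, g x := by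
  rw [← intervalIntegral.integral_Iic_sub_Iic (hg 0) (hg l)]
  ring

lemma continuous_integral_Iic {g : ℝ → ℝ} (hg : Continuous g)
    (hint : ∀ l, IntegrableOn g (Iic l)) : Continuous fun l => ∫ x in Iic l, g x := by
  rw [funext (integral_Iic_eq_add_intervalIntegral hint)]
  exact continuous_const.add
    (intervalIntegral.continuous_primitive (fun a b => hg.intervalIntegrable a b) 0)

lemma integrableOn_Iic_of_forall_isBigO_abs_rpow {g : ℝ → ℝ} (hg : Continuous g)
    (h : ∀ p : ℝ, g =O[atBot] fun x => |x| ^ p) (l : ℝ) : IntegrableOn g (Iic l) :=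
  (hg.locallyIntegrable.locallyIntegrableOn _).integrableOn_of_isBigO_atBot (h (-2))
    (integrableAtFilter_abs_rpow_atBot (by norm_num))

lemma isBigO_integral_Iic_of_forall_isBigO_abs_rpow {g : ℝ → ℝ}
    (h : ∀ p : ℝ, g =O[atBot] fun x => |x| ^ p) (p : ℝ) :
    (fun l => ∫ x in Iic l, g x) =O[atBot] fun l => |l| ^ p := by
  have hp : min p 0 - 2 < -1 := by linarith [min_le_right p 0]
  refine (isBigO_integral_Iic_abs_rpow hp (h _)).trans (isBigO_abs_rpow_atBot_of_le ?_)
  linarith [min_le_left p 0]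

section IteratedPrimitivePoly

variable {ι : Type*} [Fintype ι] (e : ι → ℕ) (a : ι → ℝ)

open Nat in
noncomputable def iteratedPrimitivePoly (k : ℕ) (x : ℝ) : ℝ :=
  ∑ i, ((e i)! / (e i + k)! : ℝ) * a i * x ^ (e i + k)

lemma iteratedPrimitivePoly_zero (x : ℝ) :
    iteratedPrimitivePoly e a 0 x = ∑ i, a i * x ^ e i := by
  simp [iteratedPrimitivePoly, Nat.factorial_ne_zero]

lemma continuous_iteratedPrimitivePoly (k : ℕ) : Continuous (iteratedPrimitivePoly e a k) := by
  unfold iteratedPrimitivePoly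
  fun_prop

lemma integral_iteratedPrimitivePoly (k : ℕ) (l : ℝ) :
    ∫ x in (0 : ℝ)..l, iteratedPrimitivePoly e a k x = iteratedPrimitivePoly e a (k + 1) l := by
  unfold iteratedPrimitivePoly
  rw [intervalIntegral.integral_finsetSum fun i _ => by
    exact (by fun_prop : Continuous _).intervalIntegrable _ _]
  refine Finset.sum_congr rfl fun i _ => ?_
  rw [intervalIntegral.integral_const_mul, integral_pow, ← add_assoc, Nat.factorial_succ]
  push_cast
  field_simp
  ring

open Nat in
lemma zpow_neg_mul_iteratedPrimitivePoly (k : ℕ) {l : ℝ} (hl : l ≠ 0) :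
    l ^ (-(k : ℤ)) * k ! * iteratedPrimitivePoly e a k l =
      ∑ i, ((k ! * (e i)! : ℕ) : ℝ) / (e i + k)! * a i * l ^ e i := by
  rw [iteratedPrimitivePoly, Finset.mul_sum]
  refine Finset.sum_congr rfl fun i _ => ?_
  rw [zpow_neg, zpow_natCast, pow_add]
  push_cast
  field_simp

lemma isBigO_integral_Iic_sub_iteratedPrimitivePoly {g : ℝ → ℝ} (hg : Continuous g)
    (hint : ∀ l, IntegrableOn g (Iic l)) {k : ℕ} {q : ℝ} (hq : -1 < q)
    (h : (fun x => g x - iteratedPrimitivePoly e a k x) =O[atTop] fun x => x ^ q) :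
    (fun l => (∫ x in Iic l, g x) - iteratedPrimitivePoly e a (k + 1) l) =O[atTop]
      fun l => l ^ (q + 1) := by
  have hrepr : ∀ l, (∫ x in Iic l, g x) - iteratedPrimitivePoly e a (k + 1) l =
      (∫ x in Iic 0, g x) + ∫ x in (0 : ℝ)..l, (g x - iteratedPrimitivePoly e a k x) := by
    intro l
    have hP := continuous_iteratedPrimitivePoly e a k
    rw [integral_Iic_eq_add_intervalIntegral hint,
      intervalIntegral.integral_sub (hg.intervalIntegrable _ _) (hP.intervalIntegrable _ _),
      integral_iteratedPrimitivePoly]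
    ring
  rw [funext hrepr]
  exact (isBigO_const_rpow_atTop _ (by linarith)).add
    (isBigO_intervalIntegral_rpow_atTop hq (hg.sub (continuous_iteratedPrimitivePoly e a k)) h)

end IteratedPrimitivePoly

theorem iteratedIntegral_expansion {ι : Type*} [Fintype ι] (e : ι → ℕ) (a : ι → ℝ)
    {F : ℕ → ℝ → ℝ} (hc : Continuous (F 0)) (hbot : ∀ p : ℝ, F 0 =O[atBot] fun x => |x| ^ p)
    (htop : ∀ ε : ℝ, 0 < ε →
      (fun x => F 0 x - ∑ i, a i * x ^ e i) =O[atTop] fun x => x ^ (-1 + ε))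
    (hF : ∀ k l, F (k + 1) l = ∫ x in Iic l, F k x) (k : ℕ) :
    Continuous (F k) ∧ (∀ p : ℝ, F k =O[atBot] fun x => |x| ^ p) ∧
      ∀ ε : ℝ, 0 < ε → (fun x => F k x - iteratedPrimitivePoly e a k x) =O[atTop]
        fun x => x ^ ((k : ℝ) - 1 + ε) := by
  induction k with
  | zero =>
    refine ⟨hc, hbot, fun ε hε => ?_⟩
    simpa [iteratedPrimitivePoly_zero] using htop ε hε
  | succ k ih =>
    obtain ⟨hc, hbot, htop⟩ := ih
    have hint := integrableOn_Iic_of_forall_isBigO_abs_rpow hc hbot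
    rw [funext (hF k)]
    refine ⟨continuous_integral_Iic hc hint,
      isBigO_integral_Iic_of_forall_isBigO_abs_rpow hbot, fun ε hε => ?_⟩
    have hq : -1 < (k : ℝ) - 1 + ε := by linarith [k.cast_nonneg (α := ℝ)]
    convert isBigO_integral_Iic_sub_iteratedPrimitivePoly e a hc hint hq (htop ε hε) using 3
    push_cast
    ring

/-- Asymptotics of repeated integrals: if `f` has the expansion
`Σ_{i=0}^d aᵢ μ^{d-i} + O(μ^{-1+ε})` at `+∞` and is rapidly decreasing at `−∞`,
then the `k`-fold repeated integral `F_k` satisfies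
`λ^{-k} k! F_k(λ) = Σ [k!(d−i)!/(d−i+k)!] aᵢ λ^{d-i} + O(λ^{-1+ε})`. -/
theorem stmt_9 (f : ℝ → ℝ) (hf : Continuous f) (d : ℕ) (a : Fin (d + 1) → ℝ)
    (hexp : ∀ ε : ℝ, 0 < ε →
      (fun μ : ℝ => f μ - ∑ i : Fin (d + 1), a i * μ ^ (d - (i : ℕ))) =O[atTop]
        (fun μ : ℝ => μ ^ (-1 + ε)))
    (hbot : ∀ n : ℕ, f =O[atBot] (fun μ : ℝ => |μ| ^ (-(n : ℤ))))
    (F : ℕ → ℝ → ℝ) (hF0 : F 0 = f)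
    (hFs : ∀ (k : ℕ) (l : ℝ), F (k + 1) l = ∫ μ in Set.Iic l, F k μ) :
    ∀ k : ℕ, 1 ≤ k → ∀ ε : ℝ, 0 < ε →
      (fun l : ℝ => l ^ (-(k : ℤ)) * (Nat.factorial k) * F k l
          - ∑ i : Fin (d + 1),
              ((Nat.factorial k * Nat.factorial (d - (i : ℕ)) : ℕ) : ℝ) / (Nat.factorial (d - (i : ℕ) + k) : ℝ)
                * a i * l ^ (d - (i : ℕ))) =O[atTop]
        (fun l : ℝ => l ^ (-1 + ε)) := by
  intro k _ ε hε
  subst hF0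
  obtain ⟨-, -, hk⟩ := iteratedIntegral_expansion (fun i : Fin (d + 1) => d - (i : ℕ)) a hf
    (isBigO_abs_rpow_of_forall_isBigO_abs_zpow hbot) hexp hFs k
  have hscale : (fun l : ℝ => l ^ (-(k : ℤ)) * k.factorial) =O[atTop]
      fun l => l ^ (-(k : ℝ)) := by
    simpa [Real.rpow_neg_natCast, mul_comm] using
      (isBigO_refl (fun l : ℝ => l ^ (-(k : ℝ))) atTop).const_mul_left (k.factorial : ℝ)
  refine (IsBigO.mul_atTop_rpow_of_isBigO_rpow _ _ _ hscale (hk ε hε) (by linarith)).congr'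
    ?_ .rfl
  filter_upwards [eventually_ne_atTop 0] with l hl
  simp only [Pi.mul_apply, mul_sub, zpow_neg_mul_iteratedPrimitivePoly _ a k hl]
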